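/- arXiv:math/0610985 — 4 statements merged into one kernel-verified Lean document; each statement's English description precedes it below -/
import Mathlib

section
/- Reduction to a good boundary (Lemma 2.6): Let n ≥ 2, let Ω ⊂ ℂⁿ be a bounded domain with connected boundary ∂Ω and let V(∂Ω) be a connected open neighborhood of ∂Ω. Let M ⊂ V(∂Ω) be a compact connected C^∞ embedded hypersurface bounding a bounded domain Ω_M with Ω ⊆ Ω_M ∪ V(∂Ω), and let δ > 0 be so small that V_δ(M) ⊆ V(∂Ω) and V_δ(M) is a tubular neighborhood of M (diffeomorphic to M × (−δ, δ), with V_δ(M) \ cl Ω_M corresponding to M × (0, δ)). Assume the Hartogs extension property holds for the pair (Ω_M, V_δ(M)): every function holomorphic on V_δ(M) is the restriction of a function holomorphic on Ω_M ∪ V_δ(M). Then the general Hartogs extension property holds for (Ω, V(∂Ω)): every function f holomorphic on V(∂Ω) is the restriction of a function F holomorphic on Ω ∪ V(∂Ω) with F = f on V(∂Ω). -/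
open Metric Set Topology

noncomputable section

/-- `ℂⁿ` with the Euclidean norm. -/
abbrev Cn (n : ℕ) : Type := EuclideanSpace ℂ (Fin n)

variable {n : ℕ}

/-- `V_δ(E)`: the union of the open balls of radius `δ` centered at the points of `E`. -/
def Vnbhd (δ : ℝ) (E : Set (Cn n)) : Set (Cn n) := ⋃ p ∈ E, Metric.ball p δ

/-- The open exterior `{‖z‖ > r}` of the closed ball of radius `r`. -/
def cutGT (r : ℝ) : Set (Cn n) := {z : Cn n | r < ‖z‖}

/-- The rind of thickness `η` around a subset `R` of the sphere `{‖z‖ = r}`: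
`Rind(R, η) = {(1+s)z : z ∈ R, |s| < η/r}`. -/
def Rind (r η : ℝ) (R : Set (Cn n)) : Set (Cn n) :=
  {w : Cn n | ∃ z ∈ R, ∃ s : ℝ, |s| < η / r ∧ w = (1 + s) • z}

/-- `Shell_r^{r+δ}(A) := {‖z‖ > r} ∩ V_δ(A)`, a one-sided shell neighborhood of `A`. -/
def Shell (r δ : ℝ) (A : Set (Cn n)) : Set (Cn n) := cutGT r ∩ Vnbhd δ A

/-- `R` is a relatively open subset of the sphere `{‖z‖ = r}`. -/
def RelOpenInSphere (r : ℝ) (R : Set (Cn n)) : Prop :=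
  R ⊆ Metric.sphere (0 : Cn n) r ∧
    ∃ O : Set (Cn n), IsOpen O ∧ R = O ∩ Metric.sphere (0 : Cn n) r

/-- `M` is a `C^∞` embedded hypersurface of `ℂⁿ ≅ ℝ^{2n}`: near each of its points it is the
regular zero set of a `C^∞` real-valued defining function. -/
def IsSmoothHypersurface (M : Set (Cn n)) : Prop :=
  ∀ p ∈ M, ∃ (U : Set (Cn n)) (f : Cn n → ℝ),
    IsOpen U ∧ p ∈ U ∧ ContDiffOn ℝ (⊤ : ℕ∞) f U ∧
    (∀ z ∈ U, fderiv ℝ f z ≠ 0) ∧ M ∩ U = {z | z ∈ U ∧ f z = 0}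

/-- `N` is a `C^∞` embedded submanifold of `ℂⁿ ≅ ℝ^{2n}` of codimension `k` (without
boundary): near each of its points it is the regular zero set of a `C^∞` submersion
with values in `ℝᵏ`. -/
def IsSmoothSubmanifoldCodim (k : ℕ) (N : Set (Cn n)) : Prop :=
  ∀ p ∈ N, ∃ (U : Set (Cn n)) (f : Cn n → EuclideanSpace ℝ (Fin k)),
    IsOpen U ∧ p ∈ U ∧ ContDiffOn ℝ (⊤ : ℕ∞) f U ∧
    (∀ z ∈ U, Function.Surjective (fderiv ℝ f z)) ∧ N ∩ U = {z | z ∈ U ∧ f z = 0}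

/-- `p` is a critical point of the restriction to `M` of the distance function `r(z) = ‖z‖`:
the differential of the norm annihilates the tangent space of `M` at `p`. -/
def IsCriticalPtOfNorm (M : Set (Cn n)) (p : Cn n) : Prop :=
  p ∈ M ∧ ∀ v ∈ tangentConeAt ℝ M p, fderiv ℝ (fun z : Cn n => ‖z‖) p v = 0

/-- `p` is a nondegenerate (Morse) critical point of the restriction to the hypersurface `M`
of the distance function `r(z) = ‖z‖`: in some local `C^∞` parametrization `φ` of `M`
centered at `p` (an immersion whose image covers a neighborhood of `p` in `M`), the function
`x ↦ ‖φ x‖` has vanishing differential and nondegenerate Hessian at the origin. -/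
def IsMorseCriticalPtOfNorm (M : Set (Cn n)) (p : Cn n) : Prop :=
  ∃ (φ : EuclideanSpace ℝ (Fin (2 * n - 1)) → Cn n)
    (V : Set (EuclideanSpace ℝ (Fin (2 * n - 1)))),
    IsOpen V ∧ (0 : EuclideanSpace ℝ (Fin (2 * n - 1))) ∈ V ∧
    ContDiffOn ℝ (⊤ : ℕ∞) φ V ∧ φ 0 = p ∧
    Function.Injective (fderiv ℝ φ 0) ∧
    (∀ x ∈ V, φ x ∈ M) ∧
    (∃ U : Set (Cn n), IsOpen U ∧ p ∈ U ∧ M ∩ U ⊆ φ '' V) ∧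
    fderiv ℝ (fun x => ‖φ x‖) 0 = 0 ∧
    (∀ v, (∀ w, fderiv ℝ (fderiv ℝ (fun x => ‖φ x‖)) 0 v w = 0) → v = 0)

/-- `C` is a connected component of the set `S`. -/
def IsCCIn (S C : Set (Cn n)) : Prop := ∃ x ∈ S, C = connectedComponentIn S x

/-- `V_δ(M)` is a tubular neighborhood of `M`: it is diffeomorphic to `M × (-δ, δ)`,
the zero section corresponding to `M` itself. -/
def IsTubularNbhd (δ : ℝ) (M : Set (Cn n)) : Prop :=
  ∃ (Φ : Cn n × ℝ → Cn n) (Ψ : Cn n → Cn n × ℝ),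
    ContDiffOn ℝ (⊤ : ℕ∞) Φ (M ×ˢ Set.Ioo (-δ) δ) ∧
    ContDiffOn ℝ (⊤ : ℕ∞) Ψ (Vnbhd δ M) ∧
    Set.MapsTo Φ (M ×ˢ Set.Ioo (-δ) δ) (Vnbhd δ M) ∧
    Set.MapsTo Ψ (Vnbhd δ M) (M ×ˢ Set.Ioo (-δ) δ) ∧
    (∀ x ∈ M ×ˢ Set.Ioo (-δ) δ, Ψ (Φ x) = x) ∧
    (∀ z ∈ Vnbhd δ M, Φ (Ψ z) = z) ∧
    (∀ p ∈ M, Φ (p, 0) = p)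

/-- Identity theorem for complex-differentiable functions on an open preconnected subset
of `ℂⁿ`, proved by restriction to complex lines. -/
lemma eqOn_zero_of_preconnected_of_eventuallyEq_zero_aux
    {U : Set (Cn n)} (hUo : IsOpen U) (hUc : IsPreconnected U)
    {h : Cn n → ℂ} (hd : DifferentiableOn ℂ h U)
    {y : Cn n} (hy : y ∈ U) (h0 : h =ᶠ[nhds y] 0) :
    Set.EqOn h 0 U := by
  set Z : Set (Cn n) := {z | z ∈ U ∧ h =ᶠ[nhds z] 0} with hZ
  -- Z is open
  have hZopen : IsOpen Z := by
    rw [Metric.isOpen_iff]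
    rintro z ⟨hzU, hz0⟩
    obtain ⟨ρ, hρ, hρ0⟩ := Metric.eventually_nhds_iff.1 hz0
    obtain ⟨r, hr, hrU⟩ := Metric.isOpen_iff.1 hUo z hzU
    refine ⟨min ρ r, lt_min hρ hr, fun w hw => ⟨hrU (Metric.ball_subset_ball
      (min_le_right _ _) hw), ?_⟩⟩
    have hwb : w ∈ Metric.ball z ρ := Metric.ball_subset_ball (min_le_left _ _) hw
    filter_upwards [Metric.isOpen_ball.mem_nhds hwb] with u hu
    exact hρ0 hu
  -- closure points of Z inside U are in Z
  have habsorb : ∀ p ∈ U, p ∈ closure Z → p ∈ Z := by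
    intro p hpU hpcl
    obtain ⟨r, hr, hrU⟩ := Metric.isOpen_iff.1 hUo p hpU
    obtain ⟨q, hqZ, hqd⟩ := Metric.mem_closure_iff.1 hpcl (r / 4) (by linarith)
    obtain ⟨ρ, hρ, hρ0⟩ := Metric.eventually_nhds_iff.1 hqZ.2
    have hzero : ∀ w ∈ Metric.ball p (r / 4), h w = 0 := by
      intro w hw
      rcases eq_or_ne w q with rfl | hwq
      · exact hρ0 (Metric.mem_ball_self hρ)
      -- the complex line through q and w
      set L : ℂ → Cn n := fun t => q + t • (w - q) with hL
      have hwq' : (0 : ℝ) < ‖w - q‖ := by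
        simpa [norm_pos_iff, sub_eq_zero] using hwq
      have hLdiff : Differentiable ℂ L :=
        (differentiable_id.smul_const (w - q)).const_add q
      have hmaps : Set.MapsTo L (Metric.ball (0 : ℂ) (3 / 2)) U := by
        intro t ht
        apply hrU
        have hqd' : dist p q < r / 4 := hqd
        have h1 : ‖w - q‖ < r / 2 := by
          have h2 : dist w q ≤ dist w p + dist p q := dist_triangle w p q
          have h3 : dist w p < r / 4 := Metric.mem_ball.1 hw
          have : dist w q < r / 2 := by linarith
          simpa [dist_eq_norm] using this
        have h4 : ‖t‖ < 3 / 2 := by simpa [Metric.mem_ball, dist_eq_norm] using ht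
        have h5 : ‖L t - p‖ ≤ ‖q - p‖ + ‖t‖ * ‖w - q‖ := by
          have : L t - p = (q - p) + t • (w - q) := by
            simp only [hL]; abel
          rw [this]
          refine (norm_add_le _ _).trans ?_
          simp [norm_smul]
        have h6 : ‖q - p‖ < r / 4 := by
          rw [norm_sub_rev]; simpa [dist_eq_norm] using hqd
        have h7 : ‖t‖ * ‖w - q‖ ≤ (3 / 2) * (r / 2) := by
          apply mul_le_mul h4.le h1.le (norm_nonneg _) (by linarith)
        rw [Metric.mem_ball, dist_eq_norm]
        calc ‖L t - p‖ ≤ ‖q - p‖ + ‖t‖ * ‖w - q‖ := h5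
          _ < r / 4 + 3 / 2 * (r / 2) := by nlinarith [norm_nonneg (w - q), norm_nonneg t]
          _ ≤ r := by linarith
      have hgdiff : DifferentiableOn ℂ (h ∘ L) (Metric.ball (0 : ℂ) (3 / 2)) :=
        hd.comp hLdiff.differentiableOn hmaps
      have hganal : AnalyticOnNhd ℂ (h ∘ L) (Metric.ball (0 : ℂ) (3 / 2)) :=
        hgdiff.analyticOnNhd Metric.isOpen_ball
      have hg0 : (h ∘ L) =ᶠ[nhds (0 : ℂ)] 0 := by
        have hopen : IsOpen {t : ℂ | ‖t‖ < ρ / ‖w - q‖} := by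
          have : {t : ℂ | ‖t‖ < ρ / ‖w - q‖} = Metric.ball (0 : ℂ) (ρ / ‖w - q‖) := by
            ext t; simp [Metric.mem_ball, dist_eq_norm]
          rw [this]; exact Metric.isOpen_ball
        have hmem : (0 : ℂ) ∈ {t : ℂ | ‖t‖ < ρ / ‖w - q‖} := by
          simp [Set.mem_setOf_eq, div_pos hρ hwq']
        filter_upwards [hopen.mem_nhds hmem] with t ht
        have : dist (L t) q < ρ := by
          have : ‖t‖ * ‖w - q‖ < ρ := (lt_div_iff₀ hwq').1 ht
          simpa [hL, dist_eq_norm, norm_smul] using this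
        simpa using hρ0 this
      have h1mem : (1 : ℂ) ∈ Metric.ball (0 : ℂ) (3 / 2) := by
        simp [Metric.mem_ball, dist_eq_norm]; norm_num
      have := hganal.eqOn_zero_of_preconnected_of_eventuallyEq_zero
        (convex_ball (0 : ℂ) (3 / 2)).isPreconnected
        (Metric.mem_ball_self (by norm_num)) hg0 h1mem
      simpa [hL] using this
    refine ⟨hpU, ?_⟩
    filter_upwards [Metric.isOpen_ball.mem_nhds (Metric.mem_ball_self
      (by linarith : (0 : ℝ) < r / 4))] with u hu
    exact hzero u hu
  -- Z is clopen in U, so Z = U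
  have hUsub : U ⊆ Z ∪ (closure Z)ᶜ := by
    intro v hv
    by_cases hvc : v ∈ closure Z
    · exact Or.inl (habsorb v hv hvc)
    · exact Or.inr hvc
  intro z hzU
  by_contra hne
  have hzZ : z ∉ Z := fun hz => hne (hz.2.self_of_nhds)
  have hne2 : (U ∩ (closure Z)ᶜ).Nonempty :=
    ⟨z, hzU, fun hc => hzZ (habsorb z hzU hc)⟩
  have hne1 : (U ∩ Z).Nonempty := ⟨y, hy, hy, h0⟩
  obtain ⟨w, _, hwZ, hwc⟩ := hUc Z (closure Z)ᶜ hZopen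
    isClosed_closure.isOpen_compl hUsub hne1 hne2
  exact hwc (subset_closure hwZ)

/-- **Reduction to a good boundary (Lemma 2.6).** Let `n ≥ 2`, let `Ω ⊆ ℂⁿ` be a bounded
domain with connected boundary and `V` a connected open neighborhood of `∂Ω = frontier Ω`.
Let `M ⊆ V` be a compact connected `C^∞` embedded hypersurface bounding a bounded domain
`ΩM` (i.e. `frontier ΩM = M`) with `Ω ⊆ ΩM ∪ V`, and let `δ > 0` be so small that
`V_δ(M) ⊆ V` and `V_δ(M)` is a tubular neighborhood of `M`, diffeomorphic to `M × (-δ, δ)`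
via maps `Φ, Ψ`, with `V_δ(M) \ cl ΩM` corresponding to `M × (0, δ)`.
If the Hartogs extension property holds for the pair `(ΩM, V_δ(M))`, then it holds for
`(Ω, V)`: every `f` holomorphic on `V` is the restriction of some `F` holomorphic on
`Ω ∪ V` with `F = f` on `V`. -/
theorem reduction_to_good_boundary (n : ℕ) (hn : 2 ≤ n)
    (Ω : Set (Cn n)) (hΩopen : IsOpen Ω) (hΩconn : IsConnected Ω)
    (hΩbdd : Bornology.IsBounded Ω) (hbd : IsConnected (frontier Ω))
    (V : Set (Cn n)) (hVopen : IsOpen V) (hVconn : IsConnected V) (hVnbhd : frontier Ω ⊆ V)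
    (M ΩM : Set (Cn n))
    (hMV : M ⊆ V) (hMcp : IsCompact M) (hMconn : IsConnected M)
    (hMsmooth : IsSmoothHypersurface M)
    (hΩMopen : IsOpen ΩM) (hΩMconn : IsConnected ΩM) (hΩMbdd : Bornology.IsBounded ΩM)
    (hfrM : frontier ΩM = M) (hΩsub : Ω ⊆ ΩM ∪ V)
    (δ : ℝ) (hδ0 : 0 < δ) (hVδV : Vnbhd δ M ⊆ V)
    -- `V_δ(M)` is a tubular neighborhood of `M`, diffeomorphic to `M × (-δ, δ)`,
    -- with `V_δ(M) \ cl ΩM` corresponding to `M × (0, δ)`: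
    (Φ : Cn n × ℝ → Cn n) (Ψ : Cn n → Cn n × ℝ)
    (hΦsm : ContDiffOn ℝ (⊤ : ℕ∞) Φ (M ×ˢ Set.Ioo (-δ) δ))
    (hΨsm : ContDiffOn ℝ (⊤ : ℕ∞) Ψ (Vnbhd δ M))
    (hΦmaps : Set.MapsTo Φ (M ×ˢ Set.Ioo (-δ) δ) (Vnbhd δ M))
    (hΨmaps : Set.MapsTo Ψ (Vnbhd δ M) (M ×ˢ Set.Ioo (-δ) δ))
    (hΨΦ : ∀ x ∈ M ×ˢ Set.Ioo (-δ) δ, Ψ (Φ x) = x)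
    (hΦΨ : ∀ z ∈ Vnbhd δ M, Φ (Ψ z) = z)
    (hΦ0 : ∀ p ∈ M, Φ (p, 0) = p)
    (hsign : ∀ z ∈ Vnbhd δ M, (z ∉ closure ΩM ↔ 0 < (Ψ z).2))
    -- the Hartogs extension property for the pair `(ΩM, V_δ(M))`:
    (hpair : ∀ g : Cn n → ℂ, DifferentiableOn ℂ g (Vnbhd δ M) →
      ∃ G : Cn n → ℂ, DifferentiableOn ℂ G (ΩM ∪ Vnbhd δ M) ∧
        Set.EqOn G g (Vnbhd δ M)) :
    ∀ f : Cn n → ℂ, DifferentiableOn ℂ f V →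
      ∃ F : Cn n → ℂ, DifferentiableOn ℂ F (Ω ∪ V) ∧ Set.EqOn F f V := by
  intro f hf
  obtain ⟨G, hG, hGf⟩ := hpair f (hf.mono hVδV)
  have hVδopen : IsOpen (Vnbhd δ M) := by
    unfold Vnbhd; exact isOpen_biUnion fun p _ => isOpen_ball
  have hMVδ : M ⊆ Vnbhd δ M := fun p hp => Set.mem_biUnion hp (Metric.mem_ball_self hδ0)
  set S : Set (Cn n) := (V ∩ ΩM) ∪ Vnbhd δ M with hS
  have hSopen : IsOpen S := (hVopen.inter hΩMopen).union hVδopen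
  have hSV : S ⊆ V := Set.union_subset Set.inter_subset_left hVδV
  have hSdom : S ⊆ ΩM ∪ Vnbhd δ M :=
    Set.union_subset (fun x hx => Or.inl hx.2) Set.subset_union_right
  have hdiff : DifferentiableOn ℂ (fun z => f z - G z) S :=
    (hf.mono hSV).sub (hG.mono hSdom)
  have key : ∀ x ∈ S, f x = G x := by
    intro x hx
    set E := connectedComponentIn S x with hE
    have hEopen : IsOpen E := hSopen.connectedComponentIn
    have hxE : x ∈ E := mem_connectedComponentIn hx
    have hES : E ⊆ S := connectedComponentIn_subset S x
    have hEpre : IsPreconnected E := isPreconnected_connectedComponentIn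
    have absorb : ∀ v ∈ S, v ∈ closure E → v ∈ E := by
      intro v hvS hvcl
      obtain ⟨ε, hε, hball⟩ := Metric.isOpen_iff.1 hSopen v hvS
      obtain ⟨y, hyE, hyd⟩ := Metric.mem_closure_iff.1 hvcl ε hε
      have hyB : y ∈ Metric.ball v ε := by
        rw [Metric.mem_ball, dist_comm]; exact hyd
      have hEB : IsPreconnected (E ∪ Metric.ball v ε) :=
        hEpre.union y hyE hyB (convex_ball v ε).isPreconnected
      have hsub : E ∪ Metric.ball v ε ⊆ E :=
        hEB.subset_connectedComponentIn (Or.inl hxE) (Set.union_subset hES hball)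
      exact hsub (Or.inr (Metric.mem_ball_self hε))
    have hmeet : (E ∩ Vnbhd δ M).Nonempty := by
      by_contra hdisj
      have hEVΩ : E ⊆ V ∩ ΩM := fun w hw =>
        (hES hw).resolve_right fun h => hdisj ⟨w, hw, h⟩
      have hclM : ∀ p ∈ closure E, p ∉ M := by
        intro p hp hpM
        have hpS : p ∈ S := Or.inr (hMVδ hpM)
        exact hdisj ⟨p, absorb p hpS hp, hMVδ hpM⟩
      have hclΩM : closure E ⊆ ΩM := by
        intro p hp
        have h1 : p ∈ closure ΩM :=
          closure_mono (hEVΩ.trans Set.inter_subset_right) hp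
        by_contra hpi
        have hpf : p ∈ frontier ΩM := ⟨h1, by rwa [hΩMopen.interior_eq]⟩
        exact hclM p hp (hfrM ▸ hpf)
      have hVsub : V ⊆ E ∪ (closure E)ᶜ := by
        intro v hv
        by_cases hvc : v ∈ closure E
        · exact Or.inl (absorb v (Or.inl ⟨hv, hclΩM hvc⟩) hvc)
        · exact Or.inr hvc
      have hne1 : (V ∩ E).Nonempty := ⟨x, hSV (hES hxE), hxE⟩
      obtain ⟨m, hm⟩ := hMconn.nonempty
      have hne2 : (V ∩ (closure E)ᶜ).Nonempty := by
        refine ⟨m, hMV hm, fun hc => ?_⟩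
        have hmΩM : m ∈ ΩM := hclΩM hc
        have hmf : m ∈ frontier ΩM := hfrM ▸ hm
        exact hmf.2 (by rwa [hΩMopen.interior_eq])
      obtain ⟨w, _, hwE, hwc⟩ := hVconn.isPreconnected E (closure E)ᶜ hEopen
        isClosed_closure.isOpen_compl hVsub hne1 hne2
      exact hwc (subset_closure hwE)
    obtain ⟨y, hyE, hyVδ⟩ := hmeet
    have hzero : (fun z => f z - G z) =ᶠ[nhds y] 0 := by
      filter_upwards [hVδopen.mem_nhds hyVδ] with w hw
      simp [hGf hw]
    have hEzero := eqOn_zero_of_preconnected_of_eventuallyEq_zero_aux hEopen hEpre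
      (hdiff.mono hES) hyE hzero hxE
    exact sub_eq_zero.1 hEzero
  classical
  refine ⟨fun z => if z ∈ V then f z else G z, ?_, fun z hz => if_pos hz⟩
  intro z hz
  by_cases hzV : z ∈ V
  · have hfz : DifferentiableAt ℂ f z :=
      (hf z hzV).differentiableAt (hVopen.mem_nhds hzV)
    have heq : (fun w => if w ∈ V then f w else G w) =ᶠ[nhds z] f := by
      filter_upwards [hVopen.mem_nhds hzV] with w hw
      exact if_pos hw
    exact (hfz.congr_of_eventuallyEq heq).differentiableWithinAt
  · have hzΩ : z ∈ Ω := hz.resolve_right hzV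
    have hzΩM : z ∈ ΩM := (hΩsub hzΩ).resolve_right hzV
    have hGz : DifferentiableAt ℂ G z :=
      (hG z (Or.inl hzΩM)).differentiableAt
        ((hΩMopen.union hVδopen).mem_nhds (Or.inl hzΩM))
    have heq : (fun w => if w ∈ V then f w else G w) =ᶠ[nhds z] G := by
      filter_upwards [hΩMopen.mem_nhds hzΩM] with w hw
      by_cases hwV : w ∈ V
      · rw [if_pos hwV]; exact key w (Or.inl ⟨hwV, hw⟩)
      · exact if_neg hwV
    exact (hGz.congr_of_eventuallyEq heq).differentiableWithinAt
end
end

section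
/- Extension from the Hartogs figure (Lemma 3.2): Let n ≥ 2, let a ∈ ℕ with 1 ≤ a ≤ n−1, and let 0 < ε < 1. Define the (n−a)-concave Hartogs figure H_ε^{n−a} := { z ∈ ℂⁿ : max_{1≤i≤a}|z_i| < 1 and max_{a+1≤j≤n}|z_j| < ε } ∪ { z ∈ ℂⁿ : 1−ε < max_{1≤i≤a}|z_i| < 1 and max_{a+1≤j≤n}|z_j| < 1 }. Then every function f holomorphic on H_ε^{n−a} admits a holomorphic extension F on the open unit polydisc Δⁿ = { z ∈ ℂⁿ : max_{1≤i≤n}|z_i| < 1 } with F = f on H_ε^{n−a}. -/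
open Metric Set Topology

noncomputable section

/-- The `(n-a)`-concave Hartogs figure
`H_ε^{n-a} = {max_{1≤i≤a}|z_i| < 1, max_{a+1≤j≤n}|z_j| < ε}
  ∪ {1-ε < max_{1≤i≤a}|z_i| < 1, max_{a+1≤j≤n}|z_j| < 1}`
(indices `0, …, a-1` play the role of `1, …, a`,
and indices `a, …, n-1` the role of `a+1, …, n`). -/
def HartogsFigure (n a : ℕ) (ε : ℝ) : Set (Cn n) :=
  {z : Cn n | (∀ i : Fin n, (i : ℕ) < a → ‖z i‖ < 1) ∧
      (∀ j : Fin n, a ≤ (j : ℕ) → ‖z j‖ < ε)} ∪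
  {z : Cn n | (∃ i : Fin n, (i : ℕ) < a ∧ 1 - ε < ‖z i‖) ∧
      (∀ i : Fin n, (i : ℕ) < a → ‖z i‖ < 1) ∧
      (∀ j : Fin n, a ≤ (j : ℕ) → ‖z j‖ < 1)}

/-- The open unit polydisc `Δⁿ = {z : max_{1≤i≤n}|z_i| < 1}`. -/
def UnitPolydisc (n : ℕ) : Set (Cn n) :=
  {z : Cn n | ∀ i : Fin n, ‖z i‖ < 1}

/-!
Fix a radius `r` with `1 - ε < r < 1`. For `|z₁| < r` put
`F z = (2πi)⁻¹ ∮_{|w| = r} f(w, z₂, …, zₙ) / (w - z₁) dw`. The integrand only sees points of the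
outer part `1 - ε < |z₁| < 1` of the figure, so `F` is holomorphic on `{|z₁| < r} ∩ Δⁿ`
(differentiation under the integral sign, the derivatives being controlled by Cauchy estimates).
On the inner part of the figure `w ↦ f(w, z₂, …, zₙ)` is holomorphic on the whole unit disc, so
`F = f` there by the Cauchy formula. A point `z` of the outer part with `|z₁| < r` is reached by
multiplying the last `n - a` coordinates by `t`: along `t ↦ z(t)` both `F` and `f` are holomorphic
for `|t| < R` with some `R > 1`, and they agree for `|t| < ε`, where `z(t)` lies in the inner part;
the identity theorem gives `F z = f z`. So `F` on `|z₁| < r` and `f` on `|z₁| > 1 - ε` glue to the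
extension.
-/

open Complex Filter Real

section ParametricIntegral

variable {X E F : Type*} [TopologicalSpace X] [NormedAddCommGroup E] [NormedSpace ℂ E]
  [NormedAddCommGroup F] [NormedSpace ℂ F]

theorem norm_fderiv_le_of_forall_mem_ball_norm_le {g : E → F} {c : E} {R M : ℝ} (hR : 0 < R)
    (hg : DifferentiableOn ℂ g (ball c R)) (hM : ∀ z ∈ ball c R, ‖g z‖ ≤ M) :
    ‖fderiv ℂ g c‖ ≤ 2 * M / R := by
  refine Complex.norm_fderiv_le_div_of_mapsTo_ball hg (fun z hz => ?_) hR
  rw [mem_closedBall, dist_eq_norm]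
  linarith [norm_sub_le (g z) (g c), hM z hz, hM c (mem_ball_self hR)]

variable [ProperSpace E] {U : Set E}

/-- Cauchy estimates turn locally uniform convergence in the parameter into convergence
of the derivatives. -/
theorem continuous_fderiv_of_continuousOn {G : X → E → F} (hU : IsOpen U)
    (hG : ContinuousOn ↿G (univ ×ˢ U)) (hd : ∀ θ, DifferentiableOn ℂ (G θ) U) {x : E} (hx : x ∈ U) :
    Continuous fun θ => fderiv ℂ (G θ) x := by
  obtain ⟨ρ, hρ, hρU⟩ := nhds_basis_closedBall.mem_iff.mp (hU.mem_nhds hx)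
  rw [Metric.continuous_iff']
  intro θ₀ η hη
  have hclose : ∀ᶠ θ in 𝓝 θ₀, ∀ z ∈ closedBall x ρ, dist (G θ z) (G θ₀ z) < η * ρ / 4 := by
    refine (isCompact_closedBall x ρ).eventually_forall_of_forall_eventually fun z hz => ?_
    have hGz : ContinuousAt ↿G (θ₀, z) :=
      hG.continuousAt (prod_mem_nhds univ_mem (hU.mem_nhds (hρU hz)))
    have hnear := Metric.tendsto_nhds.mp hGz (η * ρ / 8) (by positivity)
    have hslice : Tendsto (fun p : X × E => (θ₀, p.2)) (𝓝 (θ₀, z)) (𝓝 (θ₀, z)) :=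
      (by fun_prop : Continuous fun p : X × E => (θ₀, p.2)).tendsto' _ _ rfl
    filter_upwards [hnear, hslice.eventually hnear] with p h₁ h₂
    calc dist (G p.1 p.2) (G θ₀ p.2) ≤ dist (G p.1 p.2) (G θ₀ z) + dist (G θ₀ p.2) (G θ₀ z) :=
          dist_triangle_right _ _ _
      _ < η * ρ / 8 + η * ρ / 8 := add_lt_add h₁ h₂
      _ = η * ρ / 4 := by ring
  filter_upwards [hclose] with θ hθ
  have hdiff : ∀ θ', DifferentiableAt ℂ (G θ') x := fun θ' =>
    (hd θ').differentiableAt (hU.mem_nhds hx)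
  rw [dist_eq_norm, ← fderiv_sub (hdiff θ) (hdiff θ₀)]
  calc ‖fderiv ℂ (fun z => G θ z - G θ₀ z) x‖ ≤ 2 * (η * ρ / 4) / ρ := by
        refine norm_fderiv_le_of_forall_mem_ball_norm_le hρ ?_ fun z hz => ?_
        · exact ((hd θ).sub (hd θ₀)).mono (ball_subset_closedBall.trans hρU)
        · rw [← dist_eq_norm]; exact (hθ z (ball_subset_closedBall hz)).le
    _ < η := by field_simp; linarith

theorem differentiableOn_intervalIntegral_of_continuousOn [CompleteSpace F] {G : ℝ → E → F}
    (hU : IsOpen U) (hG : ContinuousOn ↿G (univ ×ˢ U)) (hd : ∀ θ, DifferentiableOn ℂ (G θ) U)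
    (a b : ℝ) : DifferentiableOn ℂ (fun z => ∫ θ in a..b, G θ z) U := by
  intro x hx
  obtain ⟨ρ, hρ, hρU⟩ := nhds_basis_closedBall.mem_iff.mp (hU.mem_nhds hx)
  have hcont : ∀ z ∈ U, Continuous fun θ => G θ z := fun z hz =>
    hG.comp_continuous (continuous_id.prodMk continuous_const) fun θ => ⟨mem_univ θ, hz⟩
  obtain ⟨M, hM⟩ := (isCompact_uIcc.prod (isCompact_closedBall x ρ)).exists_bound_of_continuousOn
    (hG.mono (prod_mono (subset_univ _) hρU))
  have hbound : ∀ θ ∈ uIcc a b, ∀ z ∈ ball x (ρ / 2), ‖fderiv ℂ (G θ) z‖ ≤ 2 * M / (ρ / 2) := by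
    intro θ hθ z hz
    have hball : ball z (ρ / 2) ⊆ closedBall x ρ := by
      intro y hy
      rw [mem_closedBall]
      linarith [dist_triangle y z x, mem_ball.mp hy, mem_ball.mp hz]
    exact norm_fderiv_le_of_forall_mem_ball_norm_le (half_pos hρ) ((hd θ).mono (hball.trans hρU))
      fun y hy => hM (θ, y) ⟨hθ, hball hy⟩
  refine (intervalIntegral.hasFDerivAt_integral_of_dominated_of_fderiv_le
    (F' := fun z θ => fderiv ℂ (G θ) z) (ball_mem_nhds x (half_pos hρ)) ?_
    ((hcont x hx).intervalIntegrable a b)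
    (continuous_fderiv_of_continuousOn hU hG hd hx).aestronglyMeasurable
    (MeasureTheory.ae_of_all _ fun θ hθ z hz => hbound θ (uIoc_subset_uIcc hθ) z hz)
    intervalIntegrable_const
    (MeasureTheory.ae_of_all _ fun θ _ z hz => ?_)).differentiableAt.differentiableWithinAt
  · filter_upwards [hU.mem_nhds hx] with z hz
    exact (hcont z hz).aestronglyMeasurable
  · have hzU : z ∈ U := hρU (ball_subset_closedBall (ball_subset_ball (half_le_self hρ.le) hz))
    exact ((hd θ).differentiableAt (hU.mem_nhds hzU)).hasFDerivAt

theorem differentiableOn_circleIntegral_of_continuousOn [CompleteSpace F] {H : ℂ → E → F}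
    {c : ℂ} {R : ℝ} (hU : IsOpen U) (hH : ContinuousOn ↿H (sphere c |R| ×ˢ U))
    (hd : ∀ w ∈ sphere c |R|, DifferentiableOn ℂ (H w) U) :
    DifferentiableOn ℂ (fun z => ∮ w in C(c, R), H w z) U := by
  refine differentiableOn_intervalIntegral_of_continuousOn hU ?_
    (fun θ => (hd _ (circleMap_mem_sphere' c R θ)).const_smul _) 0 (2 * π)
  have hderiv : Continuous (deriv (circleMap c R)) := by
    rw [funext (deriv_circleMap c R)]
    exact (continuous_circleMap 0 R).mul continuous_const
  exact (hderiv.comp continuous_fst).continuousOn.smul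
    (hH.comp (f := fun p : ℝ × E => (circleMap c R p.1, p.2))
      (((continuous_circleMap c R).comp continuous_fst).prodMk continuous_snd).continuousOn
      fun p hp => ⟨circleMap_mem_sphere' c R p.1, hp.2⟩)

end ParametricIntegral

theorem isOpen_hartogsFigure {n : ℕ} (a : ℕ) (ε : ℝ) : IsOpen (HartogsFigure n a ε) := by
  have hc : ∀ i : Fin n, Continuous fun z : Cn n => ‖z i‖ := fun i => by fun_prop
  simp only [HartogsFigure, ofPred_and, ofPred_forall, ofPred_exists]
  refine .union (.inter ?_ ?_) (.inter ?_ (.inter ?_ ?_)) <;>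
    first
    | exact isOpen_iInter_of_finite fun i => isOpen_iInter_of_finite fun _ =>
        isOpen_lt (hc i) continuous_const
    | exact isOpen_iUnion fun i => isOpen_const.inter (isOpen_lt continuous_const (hc i))

theorem mem_hartogsFigure_of_mem_unitPolydisc {n a : ℕ} {ε : ℝ} {z : Cn n}
    (hz : z ∈ UnitPolydisc n) {i : Fin n} (hi : (i : ℕ) < a) (h : 1 - ε < ‖z i‖) :
    z ∈ HartogsFigure n a ε :=
  Or.inr ⟨⟨i, hi, h⟩, fun j _ => hz j, fun j _ => hz j⟩

theorem isOpen_unitPolydisc (n : ℕ) : IsOpen (UnitPolydisc n) := by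
  simp only [UnitPolydisc, ofPred_forall]
  exact isOpen_iInter_of_finite fun i => isOpen_lt (by fun_prop) continuous_const

section FirstCoordinate

variable {n a : ℕ} {ε r : ℝ} [NeZero n]

def updateFirst (z : Cn n) (w : ℂ) : Cn n :=
  z + (w - z 0) • EuclideanSpace.single 0 1

theorem updateFirst_apply (z : Cn n) (w : ℂ) (i : Fin n) :
    updateFirst z w i = if i = 0 then w else z i := by
  by_cases hi : i = 0 <;> simp [updateFirst, hi]

theorem updateFirst_self (z : Cn n) : updateFirst z (z 0) = z := by
  simp [updateFirst]

theorem updateFirst_mem_unitPolydisc {z : Cn n} (hz : z ∈ UnitPolydisc n) {w : ℂ}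
    (hw : ‖w‖ < 1) : updateFirst z w ∈ UnitPolydisc n := by
  intro i
  rw [updateFirst_apply]
  split_ifs
  exacts [hw, hz i]

theorem updateFirst_mem_hartogsFigure (ha : 1 ≤ a) {z : Cn n}
    (hz₁ : ∀ i : Fin n, (i : ℕ) < a → ‖z i‖ < 1) (hz₂ : ∀ j : Fin n, a ≤ (j : ℕ) → ‖z j‖ < ε)
    {w : ℂ} (hw : ‖w‖ < 1) : updateFirst z w ∈ HartogsFigure n a ε := by
  refine Or.inl ⟨fun i hi => ?_, fun j hj => ?_⟩ <;> rw [updateFirst_apply] <;> split_ifs with h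
  · exact hw
  · exact hz₁ i hi
  · simp only [h, Fin.val_zero] at hj; omega
  · exact hz₂ j hj

def firstCauchyIntegral (r : ℝ) (f : Cn n → ℂ) (z : Cn n) : ℂ :=
  (2 * π * I)⁻¹ • ∮ w in C(0, r), (w - z 0)⁻¹ • f (updateFirst z w)

theorem differentiableOn_firstCauchyIntegral (ha : 1 ≤ a) (hr₀ : 0 < r) (hr : 1 - ε < r)
    (hr₁ : r < 1) {f : Cn n → ℂ} (hf : DifferentiableOn ℂ f (HartogsFigure n a ε)) :
    DifferentiableOn ℂ (firstCauchyIntegral r f) ({z | ‖z 0‖ < r} ∩ UnitPolydisc n) := by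
  have hU : IsOpen ({z : Cn n | ‖z 0‖ < r} ∩ UnitPolydisc n) :=
    (isOpen_lt (by fun_prop) continuous_const).inter (isOpen_unitPolydisc n)
  have h0a : ((0 : Fin n) : ℕ) < a := by rw [Fin.val_zero]; omega
  have hmem : ∀ w ∈ sphere (0 : ℂ) |r|, ∀ z ∈ {z : Cn n | ‖z 0‖ < r} ∩ UnitPolydisc n,
      updateFirst z w ∈ HartogsFigure n a ε ∧ w - z 0 ≠ 0 := by
    rintro w hw z ⟨hz₀, hz⟩
    rw [mem_sphere_zero_iff_norm, abs_of_pos hr₀] at hw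
    refine ⟨mem_hartogsFigure_of_mem_unitPolydisc (updateFirst_mem_unitPolydisc hz (hw ▸ hr₁))
      h0a ?_, fun h => ?_⟩
    · rwa [updateFirst_apply, if_pos rfl, hw]
    · rw [sub_eq_zero.mp h] at hw
      exact hz₀.ne hw
  refine DifferentiableOn.const_smul (c := (2 * π * I)⁻¹)
    (differentiableOn_circleIntegral_of_continuousOn hU ?_ fun w hw => ?_)
  · exact ContinuousOn.smul (ContinuousOn.inv₀ (by fun_prop) fun p hp => (hmem _ hp.1 _ hp.2).2)
      (hf.continuousOn.comp (by unfold updateFirst; fun_prop) fun p hp => (hmem _ hp.1 _ hp.2).1)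
  · exact DifferentiableOn.smul (DifferentiableOn.inv (by fun_prop) fun z hz => (hmem w hw z hz).2)
      (hf.comp (by unfold updateFirst; fun_prop) fun z hz => (hmem w hw z hz).1)

theorem firstCauchyIntegral_eq_of_tail_lt (ha : 1 ≤ a) (hr₁ : r < 1) {f : Cn n → ℂ}
    (hf : DifferentiableOn ℂ f (HartogsFigure n a ε)) {z : Cn n} (hz₀ : ‖z 0‖ < r)
    (hz₁ : ∀ i : Fin n, (i : ℕ) < a → ‖z i‖ < 1) (hz₂ : ∀ j : Fin n, a ≤ (j : ℕ) → ‖z j‖ < ε) :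
    firstCauchyIntegral r f z = f z := by
  have hd : DifferentiableOn ℂ (fun w => f (updateFirst z w)) (closedBall 0 r) :=
    hf.comp (by unfold updateFirst; fun_prop) fun w hw => updateFirst_mem_hartogsFigure ha hz₁ hz₂
      ((mem_closedBall_zero_iff.mp hw).trans_lt hr₁)
  have := (hd.mono closure_ball_subset_closedBall).diffContOnCl
    |>.two_pi_i_inv_smul_circleIntegral_sub_inv_smul (mem_ball_zero_iff.mpr hz₀)
  rwa [updateFirst_self] at this

end FirstCoordinate

section ScaleTail

variable {n a : ℕ}

def scaleTail (a : ℕ) (z : Cn n) (t : ℂ) : Cn n :=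
  WithLp.toLp 2 fun i => if (i : ℕ) < a then z i else t * z i

theorem scaleTail_apply (z : Cn n) (t : ℂ) (i : Fin n) :
    scaleTail a z t i = if (i : ℕ) < a then z i else t * z i := rfl

theorem scaleTail_one (z : Cn n) : scaleTail a z 1 = z := by
  ext i
  simp [scaleTail_apply]

theorem differentiable_scaleTail (z : Cn n) : Differentiable ℂ (scaleTail a z) := by
  intro t
  refine DifferentiableAt.comp (g := WithLp.toLp 2)
    (f := fun t (i : Fin n) => if (i : ℕ) < a then z i else t * z i) t
    (PiLp.continuousLinearEquiv 2 ℂ (fun _ : Fin n => ℂ)).symm.differentiableAt ?_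
  rw [differentiableAt_pi]
  intro i
  split_ifs <;> fun_prop

theorem norm_scaleTail_apply_le (z : Cn n) (t : ℂ) {i : Fin n} (hi : a ≤ (i : ℕ)) :
    ‖scaleTail a z t i‖ ≤ ‖t‖ * ‖WithLp.ofLp z‖ := by
  rw [scaleTail_apply, if_neg (not_lt.mpr hi), norm_mul]
  gcongr
  exact norm_le_pi_norm (WithLp.ofLp z) i

theorem scaleTail_mem_unitPolydisc {z : Cn n} (hz : z ∈ UnitPolydisc n) {t : ℂ}
    (ht : ‖t‖ * ‖WithLp.ofLp z‖ < 1) : scaleTail a z t ∈ UnitPolydisc n := by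
  intro i
  by_cases hi : (i : ℕ) < a
  · rw [scaleTail_apply, if_pos hi]
    exact hz i
  · exact (norm_scaleTail_apply_le z t (not_lt.mp hi)).trans_lt ht

end ScaleTail

theorem firstCauchyIntegral_eq_of_mem_hartogsFigure {n a : ℕ} {ε r : ℝ} [NeZero n] (ha : 1 ≤ a)
    (hε : 0 < ε) (hr₀ : 0 < r) (hr : 1 - ε < r) (hr₁ : r < 1) {f : Cn n → ℂ}
    (hf : DifferentiableOn ℂ f (HartogsFigure n a ε)) {z : Cn n}
    (hz : z ∈ HartogsFigure n a ε) (hz₀ : ‖z 0‖ < r) :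
    firstCauchyIntegral r f z = f z := by
  rcases hz with ⟨hz₁, hz₂⟩ | ⟨⟨i₀, hi₀, hzi₀⟩, hz₁, hz₂⟩
  · exact firstCauchyIntegral_eq_of_tail_lt ha hr₁ hf hz₀ hz₁ hz₂
  have hz : z ∈ UnitPolydisc n := fun i =>
    if h : (i : ℕ) < a then hz₁ i h else hz₂ i (not_lt.mp h)
  set c := ‖WithLp.ofLp z‖
  have hc : c < 1 := (pi_norm_lt_iff one_pos).mpr hz
  have h0a : ((0 : Fin n) : ℕ) < a := by rw [Fin.val_zero]; omega
  have hσ₀ : ∀ t, scaleTail a z t 0 = z 0 := fun t => if_pos h0a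
  set g := fun t => firstCauchyIntegral r f (scaleTail a z t) - f (scaleTail a z t)
  -- `1 < R` and `R * c < 1`: for `‖t‖ < R` the point `scaleTail a z t` stays in the polydisc,
  -- hence in the outer part of the figure, since its coordinate `i₀` is not moved
  set R := 2 / (1 + c)
  have hR : 1 < R := by rw [lt_div_iff₀ (by positivity)]; linarith
  have hσ : ∀ t : ℂ, ‖t‖ < R → scaleTail a z t ∈ UnitPolydisc n := fun t ht =>
    scaleTail_mem_unitPolydisc hz <| calc
      ‖t‖ * c ≤ R * c := by gcongr
      _ < 1 := by rw [div_mul_eq_mul_div, div_lt_one (by positivity)]; linarith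
  have hg : DifferentiableOn ℂ g (ball 0 R) := by
    intro t ht
    have ht' : ‖t‖ < R := mem_ball_zero_iff.mp ht
    have hH : scaleTail a z t ∈ HartogsFigure n a ε :=
      mem_hartogsFigure_of_mem_unitPolydisc (hσ t ht') hi₀ (by rwa [scaleTail_apply, if_pos hi₀])
    refine DifferentiableAt.differentiableWithinAt (.sub ?_ ?_)
    · refine (differentiableOn_firstCauchyIntegral ha hr₀ hr hr₁ hf).differentiableAt ?_
        |>.comp t (differentiable_scaleTail z t)
      exact ((isOpen_lt (by fun_prop) continuous_const).inter (isOpen_unitPolydisc n)).mem_nhds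
        ⟨show ‖scaleTail a z t 0‖ < r by rwa [hσ₀], hσ t ht'⟩
    · exact (hf.differentiableAt ((isOpen_hartogsFigure a ε).mem_nhds hH)).comp t
        (differentiable_scaleTail z t)
  -- for `‖t‖ < ε` it lies in the inner part of the figure, where the Cauchy formula applies
  have hg₀ : g =ᶠ[𝓝 0] 0 := by
    filter_upwards [ball_mem_nhds 0 hε] with t ht
    refine sub_eq_zero.mpr (firstCauchyIntegral_eq_of_tail_lt ha hr₁ hf (by rwa [hσ₀]) ?_ ?_)
    · intro i hi; rw [scaleTail_apply, if_pos hi]; exact hz₁ i hi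
    · intro j hj
      calc ‖scaleTail a z t j‖ ≤ ‖t‖ * c := norm_scaleTail_apply_le z t hj
        _ ≤ ‖t‖ := mul_le_of_le_one_right (norm_nonneg t) hc.le
        _ < ε := mem_ball_zero_iff.mp ht
  have := (hg.analyticOnNhd isOpen_ball).eqOn_zero_of_preconnected_of_eventuallyEq_zero
    (convex_ball 0 R).isPreconnected (mem_ball_self (by linarith)) hg₀
    (mem_ball_zero_iff.mpr (by rwa [norm_one]) : (1 : ℂ) ∈ ball 0 R)
  simpa [g, scaleTail_one, sub_eq_zero] using this

theorem DifferentiableOn.piecewise_of_eqOn {𝕜 E F : Type*} [NontriviallyNormedField 𝕜]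
    [NormedAddCommGroup E] [NormedSpace 𝕜 E] [NormedAddCommGroup F] [NormedSpace 𝕜 F]
    {f g : E → F} {s t : Set E} [∀ z, Decidable (z ∈ s)] (hs : IsOpen s) (ht : IsOpen t)
    (hf : DifferentiableOn 𝕜 f s) (hg : DifferentiableOn 𝕜 g t) (hfg : EqOn f g (s ∩ t)) :
    DifferentiableOn 𝕜 (s.piecewise f g) (s ∪ t) := by
  rintro z (hz | hz)
  · exact ((hf z hz).differentiableAt (hs.mem_nhds hz)).congr_of_eventuallyEq
      (eventuallyEq_of_mem (hs.mem_nhds hz) fun y hy => piecewise_eq_of_mem _ _ _ hy)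
      |>.differentiableWithinAt
  · refine ((hg z hz).differentiableAt (ht.mem_nhds hz)).congr_of_eventuallyEq
      (eventuallyEq_of_mem (ht.mem_nhds hz) fun y hy => ?_) |>.differentiableWithinAt
    by_cases hys : y ∈ s
    · rw [piecewise_eq_of_mem _ _ _ hys, hfg ⟨hys, hy⟩]
    · exact piecewise_eq_of_notMem _ _ _ hys

theorem hartogs_figure_extension_general (n a : ℕ) (ha1 : 1 ≤ a) (ha2 : a ≤ n - 1)
    (ε : ℝ) (hε0 : 0 < ε) (hε1 : ε < 1)
    (f : Cn n → ℂ) (hf : DifferentiableOn ℂ f (HartogsFigure n a ε)) :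
    ∃ F : Cn n → ℂ, DifferentiableOn ℂ F (UnitPolydisc n) ∧
      Set.EqOn F f (HartogsFigure n a ε) := by
  have : NeZero n := ⟨by omega⟩
  obtain ⟨r, hr₀, hr, hr₁⟩ : ∃ r : ℝ, 0 < r ∧ 1 - ε < r ∧ r < 1 :=
    ⟨1 - ε / 2, by linarith, by linarith, by linarith⟩
  set inner := {z : Cn n | ‖z 0‖ < r} ∩ UnitPolydisc n
  set outer := {z : Cn n | 1 - ε < ‖z 0‖} ∩ UnitPolydisc n
  have h0a : ((0 : Fin n) : ℕ) < a := by rw [Fin.val_zero]; omega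
  have houter : outer ⊆ HartogsFigure n a ε := fun z hz =>
    mem_hartogsFigure_of_mem_unitPolydisc hz.2 h0a hz.1
  have hcover : UnitPolydisc n ⊆ inner ∪ outer := fun z hz =>
    (lt_or_ge ‖z 0‖ r).imp (fun h => ⟨h, hz⟩) fun h => ⟨hr.trans_le h, hz⟩
  have heq : EqOn (firstCauchyIntegral r f) f (inner ∩ HartogsFigure n a ε) := fun z hz =>
    firstCauchyIntegral_eq_of_mem_hartogsFigure ha1 hε0 hr₀ hr hr₁ hf hz.2 hz.1.1
  classical
  refine ⟨inner.piecewise (firstCauchyIntegral r f) f, ?_, fun z hz => ?_⟩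
  · refine (DifferentiableOn.piecewise_of_eqOn
      ((isOpen_lt (by fun_prop) continuous_const).inter (isOpen_unitPolydisc n))
      ((isOpen_lt continuous_const (by fun_prop)).inter (isOpen_unitPolydisc n))
      (differentiableOn_firstCauchyIntegral ha1 hr₀ hr hr₁ hf) (hf.mono houter)
      fun z hz => heq ⟨hz.1, houter hz.2⟩).mono hcover
  · by_cases hz' : z ∈ inner
    · rw [piecewise_eq_of_mem _ _ _ hz', heq ⟨hz', hz⟩]
    · exact piecewise_eq_of_notMem _ _ _ hz'

/-- **Extension from the Hartogs figure (Lemma 3.2).** Let `n ≥ 2`, `1 ≤ a ≤ n-1` and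
`0 < ε < 1`.  Every function `f` holomorphic on the Hartogs figure `H_ε^{n-a}` admits a
holomorphic extension `F` to the unit polydisc `Δⁿ`, with `F = f` on `H_ε^{n-a}`. -/
theorem hartogs_figure_extension (n a : ℕ) (hn : 2 ≤ n) (ha1 : 1 ≤ a) (ha2 : a ≤ n - 1)
    (ε : ℝ) (hε0 : 0 < ε) (hε1 : ε < 1)
    (f : Cn n → ℂ) (hf : DifferentiableOn ℂ f (HartogsFigure n a ε)) :
    ∃ F : Cn n → ℂ, DifferentiableOn ℂ F (UnitPolydisc n) ∧
      Set.EqOn F f (HartogsFigure n a ε) :=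
  hartogs_figure_extension_general n a ha1 ha2 ε hε0 hε1 f hf
end
end

section
/- Connectedness controlling monodromy in the shell (Lemma 3.8): Let n ≥ 2, r > 1, and let 0 < δ < 1 be sufficiently small. Let R ⊆ S_r be a relatively open subset of the sphere S_r = { ‖z‖ = r } with relative boundary N = ∂R in S_r, and set Shell_r^{r+δ}(R∪N) := { ‖z‖ > r } ∩ V_δ(R∪N). Let η = c·δ²/r with c ∈ (0,1) a constant depending only on n (so that η ≪ δ). Let R' ⊆ R be an arbitrary relatively open subset, let p' ∈ R ∪ N, and let R'' ⊆ S_r be a relatively open connected set with p' ∈ R'' and R'' ⊆ B(p', δ/2) (such as the Levi-Hartogs region R_{p'} of Lemma 3.5). Then the intersection Rind(R'', η) ∩ ( Shell_r^{r+δ}(R∪N) ∪ Rind(R', η) ) is connected. -/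
open Metric Set Topology

noncomputable section

variable {n : ℕ}

/-- **Connectedness controlling monodromy in the shell (Lemma 3.8).** Let `n ≥ 2` and
`r > 1`, and let `0 < δ < 1` be sufficiently small.  Let `R` be a relatively open subset
of the sphere `S_r = {‖z‖ = r}` with relative boundary `N = cl R \ R`, and set
`Shell_r^{r+δ}(R ∪ N) = {‖z‖ > r} ∩ V_δ(R ∪ N)`.  Let `η = c·δ²/r` with `c ∈ (0,1)` a
constant depending only on `n`.  Let `R' ⊆ R` be relatively open, let `p' ∈ R ∪ N`, and
let `R''` be a relatively open connected subset of `S_r` with `p' ∈ R''` and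
`R'' ⊆ B(p', δ/2)`.  Then `Rind(R'', η) ∩ (Shell_r^{r+δ}(R ∪ N) ∪ Rind(R', η))`
is connected. -/
theorem rind_monodromy_connected (n : ℕ) (hn : 2 ≤ n) :
    ∃ c : ℝ, 0 < c ∧ c < 1 ∧
      ∀ r : ℝ, 1 < r →
        ∃ δ₀ : ℝ, 0 < δ₀ ∧
          ∀ δ : ℝ, 0 < δ → δ < 1 → δ < δ₀ →
            ∀ R : Set (Cn n), RelOpenInSphere r R →
              ∀ R' : Set (Cn n), R' ⊆ R → RelOpenInSphere r R' →
                ∀ p' ∈ R ∪ (closure R \ R),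
                  ∀ R'' : Set (Cn n), RelOpenInSphere r R'' → IsConnected R'' →
                    p' ∈ R'' → R'' ⊆ Metric.ball p' (δ / 2) →
                    IsConnected
                      (Rind r (c * δ ^ 2 / r) R'' ∩
                        (Shell r δ (R ∪ (closure R \ R)) ∪ Rind r (c * δ ^ 2 / r) R')) := by
  classical
  refine ⟨1/2, by norm_num, by norm_num, fun r hr => ⟨1/2, by norm_num, ?_⟩⟩
  intro δ hδ0 hδ1 hδ2 R hR R' hR'R hR' p' hp' R'' hR'' hR''conn hp'R'' hR''ball
  have hr0 : (0:ℝ) < r := lt_trans one_pos hr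
  set η : ℝ := 1/2 * δ ^ 2 / r with hηdef
  set t : ℝ := η / r with htdef
  have hη0 : 0 < η := by positivity
  have ht0 : 0 < t := div_pos hη0 hr0
  have hηδ : η < δ / 2 := by
    rw [hηdef]
    rw [div_lt_iff₀ hr0]
    nlinarith
  have ht1 : t < 1 := by
    rw [htdef, hηdef, div_div, div_lt_one (by positivity)]
    nlinarith
  -- norm of points on R'' and R'
  have hzR'' : ∀ z ∈ R'', ‖z‖ = r := fun z hz =>
    mem_sphere_zero_iff_norm.mp (hR''.1 hz)
  have hzR' : ∀ z ∈ R', ‖z‖ = r := fun z hz =>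
    mem_sphere_zero_iff_norm.mp (hR.1 (hR'R hz))
  have hnorm : ∀ (s : ℝ) (z : Cn n), ‖z‖ = r → |s| < 1 → ‖(1 + s) • z‖ = (1 + s) * r := by
    intro s z hz hs
    have h1 : 0 < 1 + s := by
      rcases abs_lt.mp hs with ⟨h, _⟩; linarith
    rw [norm_smul, Real.norm_eq_abs, abs_of_pos h1, hz]
  set X : Set (Cn n) :=
    Rind r (1 / 2 * δ ^ 2 / r) R'' ∩
      (Shell r δ (R ∪ (closure R \ R)) ∪ Rind r (1 / 2 * δ ^ 2 / r) R') with hXdef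
  set Out : Set (Cn n) := (fun p : Cn n × ℝ => (1 + p.2) • p.1) '' (R'' ×ˢ Set.Ioo 0 t)
    with hOutdef
  have hmemRind : ∀ (S : Set (Cn n)) (z : Cn n), z ∈ S → ∀ s : ℝ, |s| < t →
      (1 + s) • z ∈ Rind r (1 / 2 * δ ^ 2 / r) S := by
    intro S z hz s hs
    exact ⟨z, hz, s, by rw [← hηdef, ← htdef]; exact hs, rfl⟩
  have hOutX : Out ⊆ X := by
    rintro w ⟨⟨z, s⟩, ⟨hz, hs0, hst⟩, rfl⟩
    have hzr := hzR'' z hz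
    have hsabs : |s| < t := by rw [abs_of_pos hs0]; exact hst
    constructor
    · exact hmemRind R'' z hz s hsabs
    · left
      constructor
      · show r < ‖(1 + s) • z‖
        rw [hnorm s z hzr (lt_trans hsabs ht1)]
        nlinarith
      · -- in Vnbhd δ (R ∪ N) via the ball around p'
        have hd : dist ((1 + s) • z) p' < δ := by
          have h1 : dist ((1 + s) • z) z = s * r := by
            rw [dist_eq_norm]
            have h2 : (1 + s) • z - z = s • z := by
              rw [add_smul, one_smul]; abel
            rw [h2, norm_smul, Real.norm_eq_abs, abs_of_pos hs0, hzr]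
          have h2 : dist z p' < δ / 2 := hR''ball hz
          have h3 : s * r < η := by
            rw [htdef] at hst
            have := (lt_div_iff₀ hr0).mp hst
            linarith [mul_comm s r]
          calc dist ((1 + s) • z) p' ≤ dist ((1 + s) • z) z + dist z p' :=
                dist_triangle _ _ _
            _ < η + δ / 2 := by rw [h1]; exact add_lt_add h3 h2
            _ < δ := by linarith
        exact Set.mem_biUnion hp' (Metric.mem_ball.mpr hd)
  have hOutConn : IsPreconnected Out := by
    apply (hR''conn.isPreconnected.prod isPreconnected_Ioo).image
    exact (Continuous.smul (continuous_const.add continuous_snd) continuous_fst).continuousOn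
  have hw0 : (1 + t/2) • p' ∈ Out :=
    ⟨(p', t/2), ⟨hp'R'', by constructor <;> [positivity; linarith]⟩, rfl⟩
  constructor
  · exact ⟨_, hOutX hw0⟩
  · apply isPreconnected_of_forall ((1 + t/2) • p')
    intro y hy
    -- decompose y
    obtain ⟨z, hz, s, hs, rfl⟩ := hy.1
    rw [← hηdef, ← htdef] at hs
    have hzr := hzR'' z hz
    have hs1 : |s| < 1 := lt_trans hs ht1
    have h1s : 0 < 1 + s := by rcases abs_lt.mp hs1 with ⟨h, _⟩; linarith
    -- key fact: if s ≤ 0 then z ∈ R'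
    have hkey : s ≤ 0 → z ∈ R' := by
      intro hs0
      rcases hy.2 with hsh | hrind
      · exfalso
        have hlt : r < ‖(1 + s) • z‖ := hsh.1
        rw [hnorm s z hzr hs1] at hlt
        nlinarith
      · obtain ⟨z', hz', s', hs', heq⟩ := hrind
        rw [← hηdef, ← htdef] at hs'
        have hz'r := hzR' z' hz'
        have hs'1 : |s'| < 1 := lt_trans hs' ht1
        have h1s' : 0 < 1 + s' := by rcases abs_lt.mp hs'1 with ⟨h, _⟩; linarith
        have hnn : ‖(1 + s) • z‖ = ‖(1 + s') • z'‖ := by rw [heq]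
        rw [hnorm s z hzr hs1, hnorm s' z' hz'r hs'1] at hnn
        have hss : s = s' := by
          have := mul_right_cancel₀ (ne_of_gt hr0) hnn
          linarith
        subst hss
        have hzz : z = z' := smul_right_injective (Cn n) (ne_of_gt h1s) heq
        rwa [hzz]
    -- connecting set: Out ∪ radial segment
    set g : ℝ → Cn n := fun s' => (1 + s') • z with hgdef
    set L : Set (Cn n) := g '' Set.uIcc s (t/2) with hLdef
    refine ⟨Out ∪ L, ?_, Or.inl hw0, Or.inr ⟨s, Set.left_mem_uIcc, rfl⟩, ?_⟩
    · rintro w (hw | ⟨s', hs', rfl⟩)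
      · exact hOutX hw
      · rcases lt_or_ge 0 s' with hpos | hnonpos
        · -- in Out
          have habs : |s| < t := hs
          have hst : s < t := (abs_lt.mp habs).2
          have hs't : s' < t := by
            have hmax : max s (t/2) < t := max_lt hst (by linarith)
            have hle : s' ≤ max s (t/2) := by
              rcases hs' with ⟨_, h2⟩
              simpa [Set.uIcc] using h2
            linarith
          exact hOutX ⟨(z, s'), ⟨hz, hpos, hs't⟩, rfl⟩
        · -- s' ≤ 0: use R'
          have hss' : s ≤ s' := by
            have hge : min s (t/2) ≤ s' := by
              rcases hs' with ⟨h1, _⟩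
              simpa [Set.uIcc] using h1
            rcases le_or_gt s (t/2) with h | h
            · rwa [min_eq_left h] at hge
            · exfalso
              rw [min_eq_right h.le] at hge
              linarith
          have hs'abs : |s'| < t := by
            rw [abs_of_nonpos hnonpos]
            have h4 : |s| < t := hs
            rw [abs_lt] at h4
            linarith
          have hzR'mem : z ∈ R' := hkey (le_trans hss' hnonpos)
          exact ⟨hmemRind R'' z hz s' hs'abs, Or.inr (hmemRind R' z hzR'mem s' hs'abs)⟩
    · -- Out ∪ L is preconnected
      have hLconn : IsPreconnected L := by
        apply isPreconnected_uIcc.image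
        exact (Continuous.smul (continuous_const.add continuous_id) continuous_const).continuousOn
      apply hOutConn.union (g (t/2))
      · exact ⟨(z, t/2), ⟨hz, by constructor <;> [positivity; linarith]⟩, rfl⟩
      · exact ⟨t/2, Set.right_mem_uIcc, rfl⟩
      · exact hLconn
end
end

section
/- Shell inclusion near the farthest critical point (Lemma 4.6): Let n ≥ 2 and let M ⊂ ℂⁿ be a good Morse boundary bounding the bounded domain Ω_M, with critical radii 2 ≤ r̂₁ < ⋯ < r̂_κ, and let δ > 0 be sufficiently small (δ < 1, δ smaller than the minimal gap between consecutive critical radii, and V_δ(M) a tubular neighborhood of M). Then for all radii r, r' with r̂_{κ−1} < r < r' < r̂_κ, the piece of shell Shell_{r'}^{r'+δ}(R_{r'} ∪ N_{r'}) := { ‖z‖ > r' } ∩ V_δ(R_{r'} ∪ N_{r'}) is contained in Ω_{>r'} ∪ V_δ(M_{>r})_{>r}. -/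
open Metric Set Topology

noncomputable section

variable {n : ℕ}

/-- A good Morse boundary: a compact connected `C^∞` embedded hypersurface `M ⊆ ℂⁿ`
bounding a bounded domain `Ω` with `2 ≤ dist(0, cl Ω) ≤ 5`, such that the restriction of
`r(z) = ‖z‖` to `M` is a Morse function with finitely many nondegenerate critical points
`crit 0, …, crit (κ-1)` located on distinct sphere levels
`2 ≤ ‖crit 0‖ < ⋯ < ‖crit (κ-1)‖ ≤ 5 + diam (cl Ω)`. -/
structure GoodMorseBoundary (n : ℕ) where
  M : Set (Cn n)
  Ω : Set (Cn n)
  κ : ℕ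
  crit : Fin κ → Cn n
  isOpen_Ω : IsOpen Ω
  isConnected_Ω : IsConnected Ω
  isBounded_Ω : Bornology.IsBounded Ω
  frontier_Ω : frontier Ω = M
  isCompact_M : IsCompact M
  isConnected_M : IsConnected M
  smooth_M : IsSmoothHypersurface M
  dist_lb : 2 ≤ Metric.infDist (0 : Cn n) (closure Ω)
  dist_ub : Metric.infDist (0 : Cn n) (closure Ω) ≤ 5
  crit_isCrit : ∀ i, IsCriticalPtOfNorm M (crit i)
  crit_morse : ∀ i, IsMorseCriticalPtOfNorm M (crit i)
  radii_strictMono : StrictMono fun i => ‖crit i‖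
  radii_lb : ∀ i, 2 ≤ ‖crit i‖
  radii_ub : ∀ i, ‖crit i‖ ≤ 5 + Metric.diam (closure Ω)
  crit_complete : ∀ p, IsCriticalPtOfNorm M p → ∃ i, p = crit i

namespace GoodMorseBoundary

variable (B : GoodMorseBoundary n)

/-- The `i`-th critical sphere level `r̂ᵢ`. -/
def rhat (i : ℕ) (h : i < B.κ) : ℝ := ‖B.crit ⟨i, h⟩‖

/-- `M_{>r} = M ∩ {‖z‖ > r}`. -/
def Mgt (r : ℝ) : Set (Cn n) := B.M ∩ cutGT r

/-- `Ω_{>r} = Ω_M ∩ {‖z‖ > r}`. -/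
def Ωgt (r : ℝ) : Set (Cn n) := B.Ω ∩ cutGT r

/-- `V_δ(M_{>r})_{>r} = V_δ(M_{>r}) ∩ {‖z‖ > r}`. -/
def Vgt (δ r : ℝ) : Set (Cn n) := Vnbhd δ (B.Mgt r) ∩ cutGT r

/-- `R_{r'} = Ω_M ∩ {‖z‖ = r'}`. -/
def Rslice (r : ℝ) : Set (Cn n) := B.Ω ∩ Metric.sphere (0 : Cn n) r

/-- `N_{r'} = M ∩ {‖z‖ = r'}`. -/
def Nslice (r : ℝ) : Set (Cn n) := B.M ∩ Metric.sphere (0 : Cn n) r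

end GoodMorseBoundary

/-- **Shell inclusion near the farthest critical point (Lemma 4.6).** Let `n ≥ 2`, let
`B` be a good Morse boundary with critical radii `r̂₁ < ⋯ < r̂_κ` (`κ ≥ 2`), and let
`δ > 0` be sufficiently small: `δ < 1`, `δ` smaller than the minimal gap between
consecutive critical radii, and `V_δ(M)` a tubular neighborhood of `M`.  Then for all
radii `r, r'` with `r̂_{κ-1} < r < r' < r̂_κ`, the piece of shell
`Shell_{r'}^{r'+δ}(R_{r'} ∪ N_{r'}) = {‖z‖ > r'} ∩ V_δ(R_{r'} ∪ N_{r'})` is contained in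
`Ω_{>r'} ∪ V_δ(M_{>r})_{>r}`. -/
theorem shell_inclusion_top (n : ℕ) (hn : 2 ≤ n) (B : GoodMorseBoundary n)
    (hκ : 2 ≤ B.κ)
    (δ : ℝ) (hδ0 : 0 < δ) (hδ1 : δ < 1)
    (hgap : ∀ i : ℕ, ∀ h : i + 1 < B.κ,
      δ < B.rhat (i + 1) h - B.rhat i (by omega))
    (htub : IsTubularNbhd δ B.M)
    (r r' : ℝ)
    (h1 : B.rhat (B.κ - 2) (by omega) < r) (h2 : r < r')
    (h3 : r' < B.rhat (B.κ - 1) (by omega)) :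
    Shell r' δ (B.Rslice r' ∪ B.Nslice r') ⊆ B.Ωgt r' ∪ B.Vgt δ r := by
  intro z hz
  obtain ⟨hz', hzV⟩ := hz
  have hz' : r' < ‖z‖ := hz'
  simp only [Vnbhd, Set.mem_iUnion, Metric.mem_ball] at hzV
  obtain ⟨p, hpE, hzp⟩ := hzV
  have hr2 : (2 : ℝ) ≤ B.rhat (B.κ - 2) (by omega) := B.radii_lb _
  have hr'2 : (2 : ℝ) < r' := by linarith
  have hr'0 : (0 : ℝ) < r' := by linarith
  rcases hpE with hpR | hpN
  · -- p ∈ Rslice r' : p ∈ Ω, ‖p‖ = r'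
    obtain ⟨hpΩ, hpS⟩ := hpR
    have hpn : ‖p‖ = r' := by simpa using hpS
    by_cases hzΩ : z ∈ B.Ω
    · exact Or.inl ⟨hzΩ, hz'⟩
    by_cases hzc : z ∈ closure B.Ω
    · -- z ∈ frontier Ω = M
      have hzM : z ∈ B.M := by
        rw [← B.frontier_Ω]
        rw [frontier, B.isOpen_Ω.interior_eq]
        exact ⟨hzc, hzΩ⟩
      refine Or.inr ⟨?_, by exact (lt_trans h2 hz' : r < ‖z‖)⟩
      simp only [Vnbhd, Set.mem_iUnion, Metric.mem_ball]
      exact ⟨z, ⟨hzM, (lt_trans h2 hz' : r < ‖z‖)⟩, by simpa using hδ0⟩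
    · -- path argument
      set d : ℝ := ‖z - p‖ with hd
      have hdδ : d < δ := by rwa [hd, ← dist_eq_norm]
      have hd0 : 0 ≤ d := norm_nonneg _
      set u : ℝ → Cn n := fun t => p + t • (z - p) with hu
      have hun : ∀ t ∈ Set.Icc (0:ℝ) 1, r' - t * d ≤ ‖u t‖ := by
        intro t ht
        have h1 : ‖p - u t‖ = t * d := by
          have he : p - u t = (-t) • (z - p) := by
            rw [hu]; simp only; rw [neg_smul]; abel
          rw [he, norm_smul, Real.norm_eq_abs, abs_neg, abs_of_nonneg ht.1]
        have h2 : ‖p‖ - ‖u t‖ ≤ ‖p - u t‖ := norm_sub_norm_le _ _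
        rw [h1, hpn] at h2
        linarith
      have hupos : ∀ t ∈ Set.Icc (0:ℝ) 1, 0 < ‖u t‖ := by
        intro t ht
        have := hun t ht
        nlinarith [ht.1, ht.2, hd0, hdδ]
      set γ : ℝ → Cn n := fun t => (max ‖u t‖ r' / ‖u t‖) • u t with hγ
      have hγn : ∀ t ∈ Set.Icc (0:ℝ) 1, ‖γ t‖ = max ‖u t‖ r' := by
        intro t ht
        have h0 := hupos t ht
        have hmax : 0 ≤ max ‖u t‖ r' := le_max_of_le_left h0.le
        rw [hγ]
        simp only
        rw [norm_smul, Real.norm_eq_abs, abs_of_nonneg (div_nonneg hmax h0.le),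
          div_mul_cancel₀ _ h0.ne']
      have hγz : ∀ t ∈ Set.Icc (0:ℝ) 1, ‖z - γ t‖ ≤ d := by
        intro t ht
        have h0 := hupos t ht
        have hzu : ‖z - u t‖ = (1 - t) * d := by
          have : z - u t = (1 - t) • (z - p) := by
            rw [hu]; simp only
            rw [sub_smul, one_smul]; abel
          rw [this, norm_smul, Real.norm_eq_abs, abs_of_nonneg (by linarith [ht.2])]
        have huγ : ‖u t - γ t‖ = max ‖u t‖ r' - ‖u t‖ := by
          have : u t - γ t = (1 - max ‖u t‖ r' / ‖u t‖) • u t := by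
            rw [hγ]; simp only
            rw [sub_smul, one_smul]
          rw [this, norm_smul, Real.norm_eq_abs]
          have hge : ‖u t‖ ≤ max ‖u t‖ r' := le_max_left _ _
          have : 1 - max ‖u t‖ r' / ‖u t‖ ≤ 0 := by
            rw [sub_nonpos, le_div_iff₀ h0, one_mul]; exact hge
          rw [abs_of_nonpos this, neg_sub, sub_mul, div_mul_cancel₀ _ h0.ne', one_mul]
        have hbound : max ‖u t‖ r' - ‖u t‖ ≤ t * d := by
          rcases max_cases ‖u t‖ r' with ⟨he, _⟩ | ⟨he, _⟩
          · rw [he, sub_self]; exact mul_nonneg ht.1 hd0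
          · rw [he]; linarith [hun t ht]
        calc ‖z - γ t‖ ≤ ‖z - u t‖ + ‖u t - γ t‖ := by
              have : z - γ t = (z - u t) + (u t - γ t) := by abel
              rw [this]; exact norm_add_le _ _
          _ ≤ (1 - t) * d + t * d := by rw [hzu, huγ]; linarith
          _ = d := by ring
      have hγcont : ContinuousOn γ (Set.Icc (0:ℝ) 1) := by
        have hucont : Continuous u := by
          rw [hu]; exact continuous_const.add (continuous_id.smul continuous_const)
        have hnorm : ContinuousOn (fun t => ‖u t‖) (Set.Icc (0:ℝ) 1) :=
          (hucont.norm).continuousOn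
        refine ContinuousOn.congr (ContinuousOn.smul (?_ : ContinuousOn (fun t => max ‖u t‖ r' / ‖u t‖) (Set.Icc (0:ℝ) 1)) hucont.continuousOn) (fun t _ => rfl)
        exact ((hucont.norm.max continuous_const).continuousOn.div hnorm
          (fun t ht => (hupos t ht).ne'))
      have hγ0 : γ 0 = p := by
        have hu0 : u 0 = p := by rw [hu]; simp
        rw [hγ]; simp only [hu0, hpn]
        rw [max_self, div_self hr'0.ne', one_smul]
      have hγ1 : γ 1 = z := by
        have hu1 : u 1 = z := by rw [hu]; simp
        rw [hγ]; simp only [hu1]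
        rw [max_eq_left hz'.le, div_self (lt_trans hr'0 hz').ne', one_smul]
      -- crossing of the frontier
      have hconn : IsPreconnected (γ '' Set.Icc (0:ℝ) 1) :=
        (isPreconnected_Icc).image γ hγcont
      have hcross : ∃ t ∈ Set.Icc (0:ℝ) 1, γ t ∈ frontier B.Ω := by
        by_contra hno
        push_neg at hno
        have hsub : γ '' Set.Icc (0:ℝ) 1 ⊆ B.Ω ∪ (closure B.Ω)ᶜ := by
          rintro x ⟨t, ht, rfl⟩
          by_cases h : γ t ∈ B.Ω
          · exact Or.inl h
          by_cases h2 : γ t ∈ closure B.Ω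
          · exact absurd (by
              rw [frontier, B.isOpen_Ω.interior_eq]; exact ⟨h2, h⟩) (hno t ht)
          · exact Or.inr h2
        have := hconn B.Ω (closure B.Ω)ᶜ B.isOpen_Ω (isClosed_closure.isOpen_compl)
          hsub ⟨p, ⟨0, Set.left_mem_Icc.mpr zero_le_one, hγ0⟩, hpΩ⟩
          ⟨z, ⟨1, Set.right_mem_Icc.mpr zero_le_one, hγ1⟩, hzc⟩
        obtain ⟨x, _, hx1, hx2⟩ := this
        exact hx2 (subset_closure hx1)
      obtain ⟨t, ht, hqf⟩ := hcross
      set q := γ t with hq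
      have hqM : q ∈ B.M := B.frontier_Ω ▸ hqf
      have hqn : r' ≤ ‖q‖ := by rw [hq, hγn t ht]; exact le_max_right _ _
      refine Or.inr ⟨?_, (lt_trans h2 hz' : r < ‖z‖)⟩
      simp only [Vnbhd, Set.mem_iUnion, Metric.mem_ball]
      refine ⟨q, ⟨hqM, lt_of_lt_of_le h2 hqn⟩, ?_⟩
      rw [dist_eq_norm]
      exact lt_of_le_of_lt (hγz t ht) hdδ
  · -- p ∈ Nslice r' : p ∈ M, ‖p‖ = r'
    obtain ⟨hpM, hpS⟩ := hpN
    have hpn : ‖p‖ = r' := by simpa using hpS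
    refine Or.inr ⟨?_, (lt_trans h2 hz' : r < ‖z‖)⟩
    simp only [Vnbhd, Set.mem_iUnion, Metric.mem_ball]
    exact ⟨p, ⟨hpM, show r < ‖p‖ by rw [hpn]; exact h2⟩, hzp⟩
end
end
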